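/- arXiv:1606.02775 — 2 statements merged into one kernel-verified Lean document; each statement's English description precedes it below -/
import Mathlib

section
/- Fix real numbers μ and Δ with Δ ≥ 0. Let s and s′ be real numbers with s < μ, s′ < μ, (s−μ)² ≥ 2Δ and (s′−μ)² ≥ 2Δ, and set ρ = √((s−μ)² − 2Δ) and ρ′ = √((s′−μ)² − 2Δ). Then the closed disk of center (s,0) and radius ρ in ℝ² is contained in the closed disk of center (s′,0) and radius ρ′ if and only if s′ ≤ s. In particular, the numerical wall with center (s,0) is nested inside the numerical wall with center (s′,0) if and only if s > s′. -/
/-! Both disks are centred on the horizontal axis, so one lies in the other exactly when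
`ρ + |s - s'| ≤ ρ'`, i.e. when the diameter `[s - ρ, s + ρ]` lies in `[s' - ρ', s' + ρ']`.
As the center `s` moves right towards `μ`, the left end `s - ρ(s)` strictly increases (`ρ`
decreases), while the right end `s + ρ(s)` decreases because `ρ(s) ≤ μ - s` makes `ρ` drop at
least as fast as `s` grows. -/

open Complex Metric Set

def diskOnAxis (c r : ℝ) : Set (ℝ × ℝ) := {p | (p.1 - c) ^ 2 + p.2 ^ 2 ≤ r ^ 2}

noncomputable def wallRadius (μ Δ s : ℝ) : ℝ := √((s - μ) ^ 2 - 2 * Δ)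

lemma dist_ofReal_ofReal (a b : ℝ) : dist (a : ℂ) b = |a - b| := by
  simp only [dist_eq, ← ofReal_sub, norm_real, Real.norm_eq_abs]

lemma dist_equivRealProd_symm_ofReal_sq (p : ℝ × ℝ) (c : ℝ) :
    dist (equivRealProd.symm p) c ^ 2 = (p.1 - c) ^ 2 + p.2 ^ 2 := by
  rw [dist_eq, Complex.sq_norm, normSq_apply]
  simp only [equivRealProd_symm_apply, sub_re, add_re, ofReal_re, mul_re, I_re, mul_zero,
    ofReal_im, I_im, mul_one, sub_self, add_zero, sub_im, add_im, mul_im, zero_add, sub_zero]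
  ring

lemma diskOnAxis_eq_preimage_closedBall (c : ℝ) {r : ℝ} (hr : 0 ≤ r) :
    diskOnAxis c r = equivRealProd.symm ⁻¹' closedBall (c : ℂ) r := by
  ext p
  rw [mem_preimage, mem_closedBall, ← sq_le_sq₀ dist_nonneg hr,
    dist_equivRealProd_symm_ofReal_sq]
  rfl

lemma closedBall_ofReal_subset_closedBall_ofReal_iff (c c' r' : ℝ) {r : ℝ} (hr : 0 ≤ r) :
    closedBall (c : ℂ) r ⊆ closedBall (c' : ℂ) r' ↔ r + |c - c'| ≤ r' := by
  constructor
  · intro h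
    have mem_of_abs_le {x : ℝ} (hx : |x - c| ≤ r) : |x - c'| ≤ r' := by
      have := h (by rwa [mem_closedBall, dist_ofReal_ofReal])
      rwa [mem_closedBall, dist_ofReal_ofReal] at this
    have hleft := abs_le.1 (mem_of_abs_le (x := c - r) (by simp [abs_of_nonneg hr]))
    have hright := abs_le.1 (mem_of_abs_le (x := c + r) (by simp [abs_of_nonneg hr]))
    rw [← le_sub_iff_add_le', abs_sub_le_iff]
    constructor <;> linarith
  · intro h
    exact closedBall_subset_closedBall' (by rwa [dist_ofReal_ofReal])

lemma diskOnAxis_subset_diskOnAxis_iff (c c' : ℝ) {r r' : ℝ} (hr : 0 ≤ r) (hr' : 0 ≤ r') :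
    diskOnAxis c r ⊆ diskOnAxis c' r' ↔ r + |c - c'| ≤ r' := by
  rw [diskOnAxis_eq_preimage_closedBall c hr, diskOnAxis_eq_preimage_closedBall c' hr',
    Equiv.preimage_subset, closedBall_ofReal_subset_closedBall_ofReal_iff c c' r' hr]

section wallRadius

variable {μ Δ s : ℝ}

lemma wallRadius_nonneg (μ Δ s : ℝ) : 0 ≤ wallRadius μ Δ s := Real.sqrt_nonneg _

lemma wallRadius_sq (h : 2 * Δ ≤ (s - μ) ^ 2) : wallRadius μ Δ s ^ 2 = (s - μ) ^ 2 - 2 * Δ :=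
  Real.sq_sqrt (sub_nonneg.2 h)

lemma wallRadius_le_sub (hΔ : 0 ≤ Δ) (hs : s ≤ μ) : wallRadius μ Δ s ≤ μ - s :=
  Real.sqrt_le_iff.2 ⟨sub_nonneg.2 hs, by nlinarith⟩

lemma strictMonoOn_sub_wallRadius (μ Δ : ℝ) :
    StrictMonoOn (fun s ↦ s - wallRadius μ Δ s) (Iic μ) := by
  intro s _ t ht hst
  have hsq : (t - μ) ^ 2 ≤ (s - μ) ^ 2 := by nlinarith [mem_Iic.1 ht]
  have : wallRadius μ Δ t ≤ wallRadius μ Δ s := Real.sqrt_le_sqrt (by linarith)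
  dsimp only
  linarith

lemma antitoneOn_add_wallRadius (hΔ : 0 ≤ Δ) :
    AntitoneOn (fun s ↦ s + wallRadius μ Δ s) {s | s ≤ μ ∧ 2 * Δ ≤ (s - μ) ^ 2} := by
  rintro t ⟨-, ht⟩ s ⟨hs, hs₂⟩ hts
  have hle := wallRadius_le_sub hΔ hs
  -- `(t - μ)² - ((s - t) + ρ(s))² = 2 (s - t) (μ - s - ρ(s))`
  have key : (s - t + wallRadius μ Δ s) ^ 2 ≤ (t - μ) ^ 2 - 2 * Δ := by
    nlinarith [wallRadius_sq hs₂, mul_le_mul_of_nonneg_left hle (sub_nonneg.2 hts)]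
  have : s - t + wallRadius μ Δ s ≤ wallRadius μ Δ t :=
    (Real.le_sqrt (by linarith [wallRadius_nonneg μ Δ s]) (by linarith)).2 key
  dsimp only
  linarith

end wallRadius

/-- Nesting of numerical walls: for fixed `μ` and `Δ ≥ 0`, the closed disk of center
`(s,0)` and radius `ρ(s) = √((s−μ)² − 2Δ)` is contained in the one of center `(s',0)`
and radius `ρ(s')` if and only if `s' ≤ s` (for centers left of the vertical wall). -/
theorem walls_nested_iff_centers_ordered (μ Δ s s' : ℝ) (hΔ : 0 ≤ Δ)
    (hs : s < μ) (hs' : s' < μ)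
    (h1 : 2 * Δ ≤ (s - μ) ^ 2) (h2 : 2 * Δ ≤ (s' - μ) ^ 2) :
    let ρ := Real.sqrt ((s - μ) ^ 2 - 2 * Δ)
    let ρ' := Real.sqrt ((s' - μ) ^ 2 - 2 * Δ)
    ({p : ℝ × ℝ | (p.1 - s) ^ 2 + p.2 ^ 2 ≤ ρ ^ 2}
        ⊆ {p : ℝ × ℝ | (p.1 - s') ^ 2 + p.2 ^ 2 ≤ ρ' ^ 2})
      ↔ s' ≤ s := by
  change diskOnAxis s (wallRadius μ Δ s) ⊆ diskOnAxis s' (wallRadius μ Δ s') ↔ s' ≤ s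
  rw [diskOnAxis_subset_diskOnAxis_iff s s' (wallRadius_nonneg μ Δ s) (wallRadius_nonneg μ Δ s')]
  constructor
  · intro hnested
    by_contra! hlt
    have hleft := strictMonoOn_sub_wallRadius μ Δ (mem_Iic.2 hs.le) (mem_Iic.2 hs'.le) hlt
    rw [abs_sub_comm, abs_of_pos (sub_pos.2 hlt)] at hnested
    dsimp only at hleft
    linarith
  · intro hle
    have hright := antitoneOn_add_wallRadius hΔ ⟨hs'.le, h2⟩ ⟨hs.le, h1⟩ hle
    rw [abs_of_nonneg (sub_nonneg.2 hle)]
    dsimp only at hright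
    linarith
end

section
/- Fix real numbers μ and Δ with Δ ≥ 0, and let s ≠ s′ be real numbers. Then the two semicircles { (β,α) ∈ ℝ² : α > 0, (β−s)² + α² = (s−μ)² − 2Δ } and { (β,α) ∈ ℝ² : α > 0, (β−s′)² + α² = (s′−μ)² − 2Δ } are disjoint. That is, distinct numerical walls for a fixed positive-rank character never intersect in the upper half-plane. -/
/-!
Subtracting the equations of two walls cancels the quadratic terms, so the radical axis of any
two walls with distinct centres is the vertical wall `β = μ`. On that line the equation of a wall
reduces to `α² = -2Δ`, which has no solution with `α > 0` once `Δ ≥ 0`.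
-/

def numericalWall (μ Δ s : ℝ) : Set (ℝ × ℝ) :=
  {p | 0 < p.2 ∧ (p.1 - s) ^ 2 + p.2 ^ 2 = (s - μ) ^ 2 - 2 * Δ}

section

variable {μ Δ s s' : ℝ} {p : ℝ × ℝ}

lemma fst_eq_of_mem_numericalWall_inter (hss : s ≠ s')
    (hp : p ∈ numericalWall μ Δ s ∩ numericalWall μ Δ s') : p.1 = μ := by
  obtain ⟨⟨-, h⟩, ⟨-, h'⟩⟩ := hp
  have hradical : (s' - s) * (p.1 - μ) = 0 := by linear_combination (h - h') / 2
  exact sub_eq_zero.1 <| (mul_eq_zero.1 hradical).resolve_left (sub_ne_zero.2 hss.symm)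

lemma notMem_numericalWall_of_fst_eq (hΔ : 0 ≤ Δ) (hp : p.1 = μ) :
    p ∉ numericalWall μ Δ s := by
  rintro ⟨hα, h⟩
  have hsq : p.2 ^ 2 = -2 * Δ := by rw [hp] at h; linear_combination h
  linarith [pow_pos hα 2]

end

/-- Distinct numerical walls for a fixed positive-rank character (fixed `μ`, `Δ ≥ 0`)
never intersect in the upper half-plane. -/
theorem numerical_walls_disjoint (μ Δ s s' : ℝ) (hΔ : 0 ≤ Δ) (hss : s ≠ s') :
    Disjoint
      {p : ℝ × ℝ | 0 < p.2 ∧ (p.1 - s) ^ 2 + p.2 ^ 2 = (s - μ) ^ 2 - 2 * Δ}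
      {p : ℝ × ℝ | 0 < p.2 ∧ (p.1 - s') ^ 2 + p.2 ^ 2 = (s' - μ) ^ 2 - 2 * Δ} := by
  refine Set.disjoint_left.2 fun p hp hp' => ?_
  exact notMem_numericalWall_of_fst_eq hΔ (fst_eq_of_mem_numericalWall_inter hss ⟨hp, hp'⟩) hp
end
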